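/- arXiv:1907.13100 — 2 statements merged into one kernel-verified Lean document; each statement's English description precedes it below -/
import Mathlib

section
/- Additive drift theorem: Let {ξ_t}_{t≥0} be a Markov chain on a state space X with target subset X*, let V : X → ℝ≥0 satisfy V(x) = 0 for x ∈ X* and V(x) > 0 for x ∉ X*, and let τ = min{t ≥ 0 : ξ_t ∈ X*} be the first hitting time of X*. If there is a real number c > 0 such that for every t ≥ 0 and every state ξ_t with V(ξ_t) > 0 one has E(V(ξ_t) − V(ξ_{t+1}) | ξ_t) ≥ c, then E(τ | ξ_0) ≤ V(ξ_0)/c. -/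
open MeasureTheory ENNReal Classical

/-- `surviveChain K target t x` is the probability that the Markov chain with one-step
transition kernel `K`, started at `x`, has not hit the target set `target` within the first
`t` steps, i.e. `P(τ > t | ξ₀ = x)` for the first hitting time `τ = min{t ≥ 0 : ξ_t ∈ target}`. -/
noncomputable def surviveChain {X : Type*} [MeasurableSpace X]
    (K : X → Measure X) (target : Set X) : ℕ → X → ℝ≥0∞
  | 0, x => if x ∈ target then 0 else 1
  | t + 1, x => if x ∈ target then 0 else ∫⁻ y, surviveChain K target t y ∂(K x)

/-- The expected first hitting time `E(τ | ξ₀ = x)` of the target set, computed as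
`∑_{t ≥ 0} P(τ > t | ξ₀ = x)`. -/
noncomputable def expectedHittingTime {X : Type*} [MeasurableSpace X]
    (K : X → Measure X) (target : Set X) (x : X) : ℝ≥0∞ :=
  ∑' t, surviveChain K target t x

/-! If `W ≥ 0` satisfies `1 + E[W(ξ₁) | ξ₀ = x] ≤ W x` off the target, then unrolling the
recursion of `surviveChain` bounds every partial sum `∑_{s < t} P(τ > s | ξ₀ = x)` by `W x`,
hence also `E(τ | ξ₀ = x)`. The drift condition makes `W = V / c` such a function. -/

-- Superadditivity of `∫⁻` holds without measurability, unlike `lintegral_finset_sum`.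
theorem le_lintegral_finset_sum {α ι : Type*} [MeasurableSpace α] (μ : Measure α)
    (s : Finset ι) (f : ι → α → ℝ≥0∞) :
    ∑ i ∈ s, ∫⁻ a, f i a ∂μ ≤ ∫⁻ a, ∑ i ∈ s, f i a ∂μ := by
  induction s using Finset.induction_on with
  | empty => simp
  | insert i s hi ih =>
    simp only [Finset.sum_insert hi]
    calc ∫⁻ a, f i a ∂μ + ∑ j ∈ s, ∫⁻ a, f j a ∂μ
        ≤ ∫⁻ a, f i a ∂μ + ∫⁻ a, ∑ j ∈ s, f j a ∂μ := by gcongr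
      _ ≤ ∫⁻ a, f i a + ∑ j ∈ s, f j a ∂μ := le_lintegral_add _ _

section HittingTime

variable {X : Type*} [MeasurableSpace X] {K : X → Measure X} {target : Set X}

theorem surviveChain_of_mem {x : X} (hx : x ∈ target) (t : ℕ) :
    surviveChain K target t x = 0 := by
  cases t <;> simp [surviveChain, hx]

theorem surviveChain_zero_of_notMem {x : X} (hx : x ∉ target) :
    surviveChain K target 0 x = 1 := by
  simp [surviveChain, hx]

theorem surviveChain_succ_of_notMem {x : X} (hx : x ∉ target) (t : ℕ) :
    surviveChain K target (t + 1) x = ∫⁻ y, surviveChain K target t y ∂(K x) := by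
  simp [surviveChain, hx]

theorem sum_range_surviveChain_le_of_supersolution {W : X → ℝ≥0∞}
    (hW : ∀ x ∉ target, 1 + ∫⁻ y, W y ∂(K x) ≤ W x) (t : ℕ) (x : X) :
    ∑ s ∈ Finset.range t, surviveChain K target s x ≤ W x := by
  induction t generalizing x with
  | zero => simp
  | succ t ih =>
    by_cases hx : x ∈ target
    · simp [surviveChain_of_mem hx]
    calc ∑ s ∈ Finset.range (t + 1), surviveChain K target s x
        = 1 + ∑ s ∈ Finset.range t, ∫⁻ y, surviveChain K target s y ∂(K x) := by
          rw [Finset.sum_range_succ', add_comm, surviveChain_zero_of_notMem hx]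
          simp only [surviveChain_succ_of_notMem hx]
      _ ≤ 1 + ∫⁻ y, ∑ s ∈ Finset.range t, surviveChain K target s y ∂(K x) := by
          gcongr; exact le_lintegral_finset_sum _ _ _
      _ ≤ 1 + ∫⁻ y, W y ∂(K x) := by gcongr with y; exact ih y
      _ ≤ W x := hW x hx

theorem expectedHittingTime_le_of_supersolution {W : X → ℝ≥0∞}
    (hW : ∀ x ∉ target, 1 + ∫⁻ y, W y ∂(K x) ≤ W x) (x : X) :
    expectedHittingTime K target x ≤ W x :=
  ENNReal.tsum_le_of_sum_range_le fun t => sum_range_surviveChain_le_of_supersolution hW t x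

end HittingTime

theorem additive_drift_general {X : Type*} [MeasurableSpace X]
    (K : X → Measure X)
    (target : Set X)
    (V : X → ℝ)
    (hV0 : ∀ x ∈ target, V x = 0) (hVpos : ∀ x ∉ target, 0 < V x)
    (hVint : ∀ x, Integrable V (K x))
    (c : ℝ) (hc : 0 < c)
    (hdrift : ∀ x, 0 < V x → c ≤ V x - ∫ y, V y ∂(K x))
    (x₀ : X) :
    expectedHittingTime K target x₀ ≤ ENNReal.ofReal (V x₀ / c) := by
  have hVnn : ∀ y, 0 ≤ V y := fun y => by
    by_cases hy : y ∈ target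
    · exact (hV0 y hy).ge
    · exact (hVpos y hy).le
  refine expectedHittingTime_le_of_supersolution (W := fun x => ENNReal.ofReal (V x / c))
    (fun x hx => ?_) x₀
  have hmean : ∫⁻ y, ENNReal.ofReal (V y / c) ∂(K x) =
      ENNReal.ofReal ((∫ y, V y ∂(K x)) / c) := by
    rw [← integral_div, ofReal_integral_eq_lintegral_ofReal ((hVint x).div_const c)
      (.of_forall fun y => div_nonneg (hVnn y) hc.le)]
  have hstep : 1 + (∫ y, V y ∂(K x)) / c ≤ V x / c := by
    rw [le_div_iff₀ hc, add_mul, one_mul, div_mul_cancel₀ _ hc.ne']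
    linarith [hdrift x (hVpos x hx)]
  rw [hmean, ← ENNReal.ofReal_one, ← ENNReal.ofReal_add zero_le_one
    (div_nonneg (integral_nonneg hVnn) hc.le)]
  exact ENNReal.ofReal_le_ofReal hstep

/-- **Additive drift theorem.** Let `{ξ_t}` be a Markov chain on a state space `X` with
one-step transition kernel `K`, let `X*` be a target subset, let `V : X → ℝ` be a distance
function with `V(x) = 0` on `X*` and `V(x) > 0` off `X*`, and let
`τ = min{t ≥ 0 : ξ_t ∈ X*}`. If there is a real `c > 0` such that for every state `x` with
`V(x) > 0` one has `E(V(ξ_t) - V(ξ_{t+1}) | ξ_t = x) ≥ c`, then `E(τ | ξ₀) ≤ V(ξ₀)/c`. -/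
theorem additive_drift {X : Type*} [MeasurableSpace X]
    (K : X → Measure X) (hK : ∀ x, IsProbabilityMeasure (K x))
    (hKmeas : Measurable K)
    (target : Set X) (htarget : MeasurableSet target)
    (V : X → ℝ) (hVmeas : Measurable V)
    (hV0 : ∀ x ∈ target, V x = 0) (hVpos : ∀ x ∉ target, 0 < V x)
    (hVint : ∀ x, Integrable V (K x))
    (c : ℝ) (hc : 0 < c)
    (hdrift : ∀ x, 0 < V x → c ≤ V x - ∫ y, V y ∂(K x))
    (x₀ : X) :
    expectedHittingTime K target x₀ ≤ ENNReal.ofReal (V x₀ / c) :=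
  additive_drift_general K target V hV0 hVpos hVint c hc hdrift x₀
end

section
/- Let x ∈ {0,1}^n with |x|_0 = i, let p ∈ [0,1], and let X_1, …, X_m be i.i.d. copies of the one-bit-noise fitness of x on OneMax (i.e., each X_k equals n−i−1 with probability p(n−i)/n, equals n−i with probability 1−p, and equals n−i+1 with probability p·i/n), where m = 2n^3 + 1. If p·(n−i)/n ≥ 1/2 + c/n for a constant c > 0, then the median of X_1, …, X_m equals n − i − 1 with probability at least 1 − 2·exp(−2c²n⁴/m). -/
open MeasureTheory ENNReal

/-- The median of `m` real values: the `((m+1)/2)`-th smallest value for odd `m`, and the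
average of the `(m/2)`-th and `(m/2+1)`-th smallest values for even `m`. -/
noncomputable def medianOf {m : ℕ} (v : Fin m → ℝ) : ℝ :=
  let s := List.insertionSort (· ≤ ·) (List.ofFn v)
  if m % 2 = 1 then s.getD ((m - 1) / 2) 0
  else (s.getD (m / 2 - 1) 0 + s.getD (m / 2) 0) / 2

/-- One-bit noise on OneMax with parameter `p`, for a solution `x ∈ {0,1}ⁿ` with
`|x|₀ = i` zero-bits: the noisy fitness equals `n - i - 1` with probability `p(n-i)/n`,
`n - i` with probability `1 - p`, and `n - i + 1` with probability `p·i/n`. -/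
noncomputable def oneBitNoiseDist (n : ℕ) (p : ℝ) (i : ℕ) : Measure ℝ :=
  ENNReal.ofReal (p * ((n : ℝ) - i) / n) • Measure.dirac ((n : ℝ) - i - 1)
    + ENNReal.ofReal (1 - p) • Measure.dirac ((n : ℝ) - i)
    + ENNReal.ofReal (p * i / n) • Measure.dirac ((n : ℝ) - i + 1)

/-! Every sample is almost surely at least `n - i - 1`, so the median equals `n - i - 1` as soon
as more than `n³` of the `2n³ + 1` samples take that value. The number of samples that miss it
is a sum of independent indicators with mean at most `(2n³ + 1)(1/2 - c/n) ≤ n³ + 1/2 - 2cn²`,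
so by Hoeffding's inequality it reaches `n³ + 1` with probability at most
`exp(-2(cn²)² / (2n³ + 1))`. -/

open Finset ProbabilityTheory

theorem List.Pairwise.getD_eq_of_lt_count {α : Type*} [PartialOrder α] [DecidableEq α]
    {x d : α} : ∀ {l : List α} {j : ℕ}, l.Pairwise (· ≤ ·) → (∀ a ∈ l, x ≤ a) →
      j < l.count x → l.getD j d = x
  | [], _, _, _, hj => by simp at hj
  | a :: l, 0, hl, hx, hj => by
    rw [List.getD_cons_zero]
    obtain rfl | hmem := List.mem_cons.mp (List.count_pos_iff.mp hj)
    · rfl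
    · exact le_antisymm ((List.pairwise_cons.mp hl).1 x hmem) (hx a List.mem_cons_self)
  | a :: l, j + 1, hl, hx, hj => by
    rw [List.count_cons] at hj
    rw [List.getD_cons_succ]
    exact (List.pairwise_cons.mp hl).2.getD_eq_of_lt_count
      (fun b hb => hx b (List.mem_cons_of_mem a hb)) (by split at hj <;> omega)

theorem List.count_ofFn {α : Type*} [DecidableEq α] {m : ℕ} (v : Fin m → α) (x : α) :
    (List.ofFn v).count x = #{k | v k = x} := by
  rw [← Multiset.coe_count, ← Fin.univ_val_map, Multiset.count_map]
  simp [Finset.card, Finset.filter_val, eq_comm]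

theorem medianOf_eq_of_forall_le {r : ℕ} {v : Fin (2 * r + 1) → ℝ} {x : ℝ}
    (hx : ∀ k, x ≤ v k) (hcard : r < #{k | v k = x}) : medianOf v = x := by
  have hsort := List.perm_insertionSort (· ≤ ·) (List.ofFn v)
  rw [medianOf, if_pos (by omega)]
  refine (List.pairwise_insertionSort _ _).getD_eq_of_lt_count (fun a ha => ?_) ?_
  · obtain ⟨k, rfl⟩ := List.mem_ofFn.mp (hsort.mem_iff.mp ha)
    exact hx k
  · rwa [hsort.count_eq, List.count_ofFn, show (2 * r + 1 - 1) / 2 = r by omega]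

theorem measureReal_pi_card_mem_ge_le {ι α : Type*} [Fintype ι] [MeasurableSpace α]
    (μ : Measure α) [IsProbabilityMeasure μ] {S : Set α} [DecidablePred (· ∈ S)]
    (hS : MeasurableSet S) {ε : ℝ} (hε : 0 ≤ ε) :
    (Measure.pi fun _ : ι => μ).real
        {v | Fintype.card ι * μ.real S + ε ≤ #{k | v k ∈ S}} ≤
      Real.exp (-2 * ε ^ 2 / Fintype.card ι) := by
  set P := Measure.pi fun _ : ι => μ
  have hind : Measurable (S.indicator (1 : α → ℝ)) := measurable_one.indicator hS
  have hmean (k : ι) : ∫ v, S.indicator 1 (v k) ∂P = μ.real S := by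
    rw [← integral_map (measurePreserving_eval (fun _ => μ) k).measurable.aemeasurable
      hind.aestronglyMeasurable, (measurePreserving_eval _ k).map_eq, integral_indicator_one hS]
  have hsubG (k : ι) : HasSubgaussianMGF (fun v => S.indicator 1 (v k) - μ.real S)
      ((‖(1 : ℝ) - 0‖₊ / 2) ^ 2) P := by
    rw [← hmean k]
    refine hasSubgaussianMGF_of_mem_Icc (hind.comp (measurable_pi_apply k)).aemeasurable
      (ae_of_all _ fun v => ?_)
    by_cases hv : v k ∈ S <;> simp [hv]
  have hindep : iIndepFun (fun k v => S.indicator 1 (v k) - μ.real S) P :=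
    iIndepFun_pi fun _ => (hind.sub_const _).aemeasurable
  have hsum (v : ι → α) : ∑ k, (S.indicator 1 (v k) - μ.real S) =
      (#{k | v k ∈ S} : ℝ) - Fintype.card ι * μ.real S := by
    simp [Finset.sum_sub_distrib, Set.indicator_apply, Finset.sum_boole]
  calc P.real {v | Fintype.card ι * μ.real S + ε ≤ #{k | v k ∈ S}}
      = P.real {v | ε ≤ ∑ k, (S.indicator 1 (v k) - μ.real S)} := by
        simp only [hsum, le_sub_iff_add_le']
    _ ≤ Real.exp (-ε ^ 2 / (2 * ∑ _k : ι, ((‖(1 : ℝ) - 0‖₊ / 2) ^ 2 : NNReal))) :=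
        HasSubgaussianMGF.measure_sum_ge_le_of_iIndepFun hindep (fun k _ => hsubG k) hε
    _ = Real.exp (-2 * ε ^ 2 / Fintype.card ι) := by
        congr 1
        simp
        ring

theorem one_sub_exp_le_measure_medianOf_eq {r : ℕ} (μ : Measure ℝ) [IsProbabilityMeasure μ]
    {a ε : ℝ} (ha : ∀ᵐ y ∂μ, a ≤ y) (hε : 0 ≤ ε) (hfew : (2 * r + 1) * μ.real {a}ᶜ + ε ≤ r + 1) :
    1 - ENNReal.ofReal (Real.exp (-2 * ε ^ 2 / (2 * r + 1))) ≤
      (Measure.pi fun _ : Fin (2 * r + 1) => μ) {v | medianOf v = a} := by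
  set P := Measure.pi fun _ : Fin (2 * r + 1) => μ
  set H := {v : Fin (2 * r + 1) → ℝ |
    (2 * r + 1 : ℝ) * μ.real {a}ᶜ + ε ≤ #{k | v k ∈ ({a}ᶜ : Set ℝ)}}
  have hae : ∀ᵐ v ∂P, ∀ k, a ≤ v k :=
    ae_all_iff.2 fun k => (measurePreserving_eval _ k).quasiMeasurePreserving.ae ha
  have hcompl : {v | medianOf v = a}ᶜ ≤ᵐ[P] H := by
    filter_upwards [hae] with v hv hmed
    by_contra hvH
    refine hmed (medianOf_eq_of_forall_le hv ?_)
    have hsplit := card_filter_add_card_filter_not (s := univ) (fun k => v k = a)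
    simp only [card_univ, Fintype.card_fin] at hsplit
    have hlt : (#{k | v k ∈ ({a}ᶜ : Set ℝ)} : ℝ) < (2 * r + 1) * μ.real {a}ᶜ + ε := not_le.1 hvH
    have hmiss : #{k | v k ∈ ({a}ᶜ : Set ℝ)} < r + 1 := by exact_mod_cast hlt.trans_le hfew
    simp only [Set.mem_compl_iff, Set.mem_singleton_iff] at hmiss
    omega
  have hH : P H ≤ ENNReal.ofReal (Real.exp (-2 * ε ^ 2 / (2 * r + 1))) := by
    rw [← ofReal_measureReal]
    refine ENNReal.ofReal_le_ofReal ?_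
    have := measureReal_pi_card_mem_ge_le (ι := Fin (2 * r + 1)) μ
      (measurableSet_singleton a).compl hε
    simpa only [Fintype.card_fin, Nat.cast_add, Nat.cast_mul, Nat.cast_ofNat, Nat.cast_one] using this
  have hunion : 1 ≤ P {v | medianOf v = a} + P {v | medianOf v = a}ᶜ := by
    rw [← measure_univ (μ := P), ← Set.union_compl_self {v | medianOf v = a}]
    exact measure_union_le _ _
  rw [tsub_le_iff_right]
  calc 1 ≤ P {v | medianOf v = a} + P {v | medianOf v = a}ᶜ := hunion
    _ ≤ P {v | medianOf v = a} + P H := add_le_add le_rfl (measure_mono_ae hcompl)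
    _ ≤ _ := by gcongr

section OneBitNoise

variable {n i : ℕ} {p : ℝ}

theorem isProbabilityMeasure_oneBitNoiseDist (hn : 0 < n) (hi : i ≤ n) (hp0 : 0 ≤ p)
    (hp1 : p ≤ 1) :
    IsProbabilityMeasure (oneBitNoiseDist n p i) := by
  have hn' : (0 : ℝ) < n := by exact_mod_cast hn
  have hni : (0 : ℝ) ≤ n - i := sub_nonneg.2 (by exact_mod_cast hi)
  constructor
  simp only [oneBitNoiseDist, Measure.add_apply, Measure.smul_apply, measure_univ, smul_eq_mul,
    mul_one]
  rw [← ofReal_add (by positivity) (by linarith), ← ofReal_add (by positivity) (by positivity),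
    ← ofReal_one]
  congr 1
  field_simp
  ring

theorem ae_le_oneBitNoiseDist : ∀ᵐ y ∂oneBitNoiseDist n p i, (n : ℝ) - i - 1 ≤ y := by
  have hmeas : MeasurableSet {y : ℝ | (n : ℝ) - i - 1 ≤ y} := measurableSet_Ici
  simp only [oneBitNoiseDist, ae_add_measure_iff]
  refine ⟨⟨?_, ?_⟩, ?_⟩ <;> refine Measure.ae_smul_measure ((ae_dirac_iff hmeas).2 ?_) _ <;>
    linarith

theorem measureReal_oneBitNoiseDist_singleton (hi : i ≤ n) (hp0 : 0 ≤ p) :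
    (oneBitNoiseDist n p i).real {(n : ℝ) - i - 1} = p * ((n : ℝ) - i) / n := by
  have hni : (0 : ℝ) ≤ n - i := sub_nonneg.2 (by exact_mod_cast hi)
  have h1 : (n : ℝ) - i ∉ ({(n : ℝ) - i - 1} : Set ℝ) := by
    simp only [Set.mem_singleton_iff]; linarith
  have h2 : (n : ℝ) - i + 1 ∉ ({(n : ℝ) - i - 1} : Set ℝ) := by
    simp only [Set.mem_singleton_iff]; linarith
  simpa [oneBitNoiseDist, measureReal_def, Measure.dirac_apply' _ (measurableSet_singleton _), h1,
    h2] using div_nonneg (mul_nonneg hp0 hni) n.cast_nonneg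

end OneBitNoise

/-- Let `X₁, …, X_m` be i.i.d. copies of the one-bit-noise fitness of a solution with `i`
zero-bits, where `m = 2n³ + 1`. If `p(n-i)/n ≥ 1/2 + c/n` for a constant `c > 0`, then the
median of `X₁, …, X_m` equals `n - i - 1` with probability at least
`1 - 2·exp(-2c²n⁴/m)`. -/
theorem median_onebit_noise_low (n i : ℕ) (hn : 0 < n) (hi : i ≤ n)
    (p : ℝ) (hp0 : 0 ≤ p) (hp1 : p ≤ 1) (c : ℝ) (hc : 0 < c)
    (h : 1 / 2 + c / n ≤ p * ((n : ℝ) - i) / n) :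
    ENNReal.ofReal (1 - 2 * Real.exp (-2 * c ^ 2 * (n : ℝ) ^ 4 / (2 * (n : ℝ) ^ 3 + 1))) ≤
      (Measure.pi fun _ : Fin (2 * n ^ 3 + 1) => oneBitNoiseDist n p i)
        {v | medianOf v = (n : ℝ) - i - 1} := by
  have := isProbabilityMeasure_oneBitNoiseDist hn hi hp0 hp1
  have hn' : (0 : ℝ) < n := by exact_mod_cast hn
  have hmiss : (oneBitNoiseDist n p i).real {(n : ℝ) - i - 1}ᶜ ≤ 1 / 2 - c / n := by
    rw [measureReal_compl (measurableSet_singleton _), probReal_univ,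
      measureReal_oneBitNoiseDist_singleton hi hp0]
    linarith
  have hfew : (2 * ((n ^ 3 : ℕ) : ℝ) + 1) * (oneBitNoiseDist n p i).real {(n : ℝ) - i - 1}ᶜ
      + c * n ^ 2 ≤ ((n ^ 3 : ℕ) : ℝ) + 1 := by
    push_cast
    calc (2 * (n : ℝ) ^ 3 + 1) * (oneBitNoiseDist n p i).real {(n : ℝ) - i - 1}ᶜ + c * n ^ 2
        ≤ (2 * (n : ℝ) ^ 3 + 1) * (1 / 2 - c / n) + c * n ^ 2 := by gcongr
      _ = n ^ 3 + 1 / 2 - c * n ^ 2 - c / n := by field_simp; ring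
      _ ≤ n ^ 3 + 1 := by linarith [div_pos hc hn', mul_pos hc (pow_pos hn' 2)]
  have hmedian := one_sub_exp_le_measure_medianOf_eq (oneBitNoiseDist n p i)
    ae_le_oneBitNoiseDist (by positivity) hfew
  have hexp : Real.exp (-2 * (c * n ^ 2) ^ 2 / (2 * ((n ^ 3 : ℕ) : ℝ) + 1)) =
      Real.exp (-2 * c ^ 2 * (n : ℝ) ^ 4 / (2 * (n : ℝ) ^ 3 + 1)) := by
    push_cast
    ring_nf
  rw [hexp, ← ofReal_one, ← ofReal_sub _ (Real.exp_pos _).le] at hmedian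
  refine le_trans (ofReal_le_ofReal ?_) hmedian
  linarith [Real.exp_pos (-2 * c ^ 2 * (n : ℝ) ^ 4 / (2 * (n : ℝ) ^ 3 + 1))]
end
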